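/- arXiv:2506.18410 — 2 statements merged into one kernel-verified Lean document; each statement's English description precedes it below -/
import Mathlib

section
/- Let θ_2 : ℝ≥0 → ℝ solve θ̇_2 = -(v_c / R) sin θ_2 with v_c, R > 0 and initial condition θ_2(0) ∈ (-π, π). Then θ_2(t) → 0 as t → ∞. -/
open Real Set Filter

private lemma sinField_lipschitz {k : ℝ} (hk : 0 ≤ k) :
    LipschitzWith k.toNNReal (fun x : ℝ => -k * Real.sin x) := by
  apply lipschitzWith_of_nnnorm_deriv_le
  · exact (Real.differentiable_sin.const_mul (-k))
  · intro x
    have hd : deriv (fun x : ℝ => -k * Real.sin x) x = -k * Real.cos x := by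
      rw [deriv_const_mul _ Real.differentiable_sin.differentiableAt, Real.deriv_sin]
    rw [← NNReal.coe_le_coe, coe_nnnorm, hd, Real.coe_toNNReal k hk, Real.norm_eq_abs,
      abs_mul, abs_neg, abs_of_nonneg hk]
    nlinarith [abs_nonneg (Real.cos x), Real.abs_cos_le_one x, hk]

/-- Asymptotic convergence of the hitch angle: solutions of `θ̇₂ = -(v_c/R) sin θ₂`
starting in `(-π, π)` converge to `0`. -/
theorem hitch_angle_converges (θ2 : ℝ → ℝ) (vc R : ℝ) (hvc : 0 < vc) (hR : 0 < R)
    (hθ2 : Differentiable ℝ θ2)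
    (hode : ∀ t, 0 ≤ t → deriv θ2 t = -(vc / R) * Real.sin (θ2 t))
    (h0 : θ2 0 ∈ Set.Ioo (-Real.pi) Real.pi) :
    Filter.Tendsto θ2 Filter.atTop (nhds 0) := by
  set k : ℝ := vc / R with hk
  have hkpos : 0 < k := div_pos hvc hR
  have hlip := sinField_lipschitz hkpos.le
  -- Step 1: θ2 never equals ±π for t ≥ 0
  have hne : ∀ c : ℝ, Real.sin c = 0 → θ2 0 ≠ c → ∀ t, 0 ≤ t → θ2 t ≠ c := by
    intro c hc h0c t ht htc
    have key : EqOn θ2 (fun _ => c) (Icc 0 t) := by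
      apply ODE_solution_unique_of_mem_Icc_left
        (v := fun _ x => -k * Real.sin x) (s := fun _ => univ)
        (fun _ _ => hlip.lipschitzOnWith)
        (hθ2.continuous.continuousOn)
      · intro s hs
        have := (hθ2 s).hasDerivAt
        rw [hode s (le_of_lt hs.1)] at this
        exact this.hasDerivWithinAt
      · intro s _; trivial
      · exact continuousOn_const
      · intro s hs
        have : HasDerivWithinAt (fun _ : ℝ => c) 0 (Iic s) s := (hasDerivAt_const s c).hasDerivWithinAt
        simpa [hc] using this
      · intro s _; trivial
      · exact htc
    exact h0c (key ⟨le_refl 0, ht⟩)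
  -- Step 2: invariance of (-π, π)
  have hinv : ∀ t, 0 ≤ t → θ2 t ∈ Ioo (-Real.pi) Real.pi := by
    intro t ht
    by_contra hcon
    rw [mem_Ioo, not_and_or, not_lt, not_lt] at hcon
    rcases hcon with h | h
    · -- θ2 t ≤ -π : IVT gives some t1 with θ2 t1 = -π
      have : (-Real.pi) ∈ Set.Icc (θ2 t) (θ2 0) := ⟨h, h0.1.le⟩
      have hIVT := intermediate_value_Icc' (le_of_lt (lt_of_le_of_ne (le_of_not_gt ?_) ?_))
        (hθ2.continuous.continuousOn (s := Icc 0 t)) this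
      · obtain ⟨t1, ht1, ht1v⟩ := hIVT
        exact hne (-Real.pi) (by simp) (ne_of_gt h0.1) t1 ht1.1 ht1v
      · intro h'
        -- t < 0 contradicts: θ2 t ≤ -π < θ2 0 but need 0 ≤ t; we have ht
        exact absurd ht (not_le_of_gt h')
      · rintro rfl
        exact absurd h (not_le_of_gt h0.1)
    · have : Real.pi ∈ Set.Icc (θ2 0) (θ2 t) := ⟨h0.2.le, h⟩
      have hIVT := intermediate_value_Icc (le_of_lt (lt_of_le_of_ne (le_of_not_gt ?_) ?_))
        (hθ2.continuous.continuousOn (s := Icc 0 t)) this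
      · obtain ⟨t1, ht1, ht1v⟩ := hIVT
        exact hne Real.pi Real.sin_pi (ne_of_lt h0.2) t1 ht1.1 ht1v
      · intro h'
        exact absurd ht (not_le_of_gt h')
      · rintro rfl
        exact absurd h (not_le_of_gt h0.2)
  -- Step 3: u t = tan (θ2 t / 2) satisfies u' = -k u on [0, ∞)
  set u : ℝ → ℝ := fun t => Real.tan (θ2 t / 2) with hu
  have hcos : ∀ t, 0 ≤ t → 0 < Real.cos (θ2 t / 2) := by
    intro t ht
    apply Real.cos_pos_of_mem_Ioo
    have := hinv t ht
    constructor
    · linarith [this.1]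
    · linarith [this.2]
  have hud : ∀ t, 0 ≤ t → HasDerivAt u (-k * u t) t := by
    intro t ht
    have hc := (hcos t ht).ne'
    have h1 : HasDerivAt (fun s => θ2 s / 2) (deriv θ2 t / 2) t := (hθ2 t).hasDerivAt.div_const 2
    have h2 := (Real.hasDerivAt_tan hc).comp t h1
    refine HasDerivAt.congr_deriv h2 ?_
    rw [hode t ht]
    have hs2 : Real.sin (θ2 t) = 2 * Real.sin (θ2 t / 2) * Real.cos (θ2 t / 2) := by
      rw [← Real.sin_two_mul]; ring_nf
    simp only [hu]
    rw [hs2, Real.tan_eq_sin_div_cos]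
    field_simp
  -- Step 4: e^{kt} u t is constant on [0, ∞)
  have hconst : ∀ t, 0 ≤ t → u t = u 0 * Real.exp (-(k * t)) := by
    intro t ht
    set w : ℝ → ℝ := fun s => Real.exp (k * s) * u s with hw
    have hwd : ∀ s ∈ Ico 0 t, HasDerivWithinAt w 0 (Ici s) s := by
      intro s hs
      have he : HasDerivAt (fun r => Real.exp (k * r)) (k * Real.exp (k * s)) s := by
        simpa [mul_comm] using ((hasDerivAt_id s).const_mul k).exp
      have := he.mul (hud s hs.1)
      have h0 : k * Real.exp (k * s) * u s + Real.exp (k * s) * (-k * u s) = 0 := by ring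
      rw [h0] at this
      exact this.hasDerivWithinAt
    have hwc : ContinuousOn w (Icc 0 t) := by
      apply ContinuousOn.mul (Continuous.continuousOn (by continuity))
      intro s hs
      exact ((hud s hs.1).continuousAt).continuousWithinAt
    have := constant_of_has_deriv_right_zero hwc hwd t ⟨ht, le_refl t⟩
    have hws : Real.exp (k * t) * u t = Real.exp (k * 0) * u 0 := this
    rw [mul_zero, Real.exp_zero, one_mul] at hws
    have hexp : Real.exp (k * t) ≠ 0 := Real.exp_ne_zero _
    field_simp [Real.exp_neg] at hws ⊢
    rw [Real.exp_neg, ← hws, mul_comm (Real.exp (k * t)) (u t), mul_assoc, mul_inv_cancel₀ hexp, mul_one]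
  -- Step 5: conclude
  have hu0 : Tendsto u atTop (nhds 0) := by
    have h1 : Tendsto (fun t => u 0 * Real.exp (-(k * t))) atTop (nhds (u 0 * 0)) := by
      apply Tendsto.const_mul
      apply Real.tendsto_exp_atBot.comp
      apply tendsto_neg_atBot_iff.mpr
      exact (tendsto_id.const_mul_atTop hkpos)
    rw [mul_zero] at h1
    apply h1.congr'
    filter_upwards [eventually_ge_atTop 0] with t ht
    exact (hconst t ht).symm
  have harctan : Tendsto (fun t => 2 * Real.arctan (u t)) atTop (nhds 0) := by
    have := (Real.continuous_arctan.tendsto 0).comp hu0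
    rw [Real.arctan_zero] at this
    simpa using this.const_mul 2
  apply harctan.congr'
  filter_upwards [eventually_ge_atTop 0] with t ht
  have hmem := hinv t ht
  rw [hu, Real.arctan_tan (by linarith [hmem.1]) (by linarith [hmem.2])]
  ring
end

section
/- Suppose θ_1 : ℝ≥0 → ℝ satisfies θ̇_1 = -a sin θ_1 + ω_2(t) where a > 0 is constant and ω_2(t) → 0 as t → ∞. If there exist ε ∈ (0, π/2) and T such that |θ_1(t)| ≤ π/2 - ε for all t ≥ T, then for V_1 = 1 - cos θ_1 and any δ > 0 there exists T' with V_1(t) < δ for all t ≥ T'; in particular θ_1(t) → 0. -/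
open Real Filter Set

lemma escape_lemma (f : ℝ → ℝ) (hf : Differentiable ℝ f) (c s M : ℝ) (hc : 0 < c)
    (hd : ∀ t, s ≤ t → deriv f t ≤ -c) (hM : ∀ t, s ≤ t → M ≤ f t) : False := by
  have hanti : AntitoneOn (fun t => f t + c * t) (Set.Ici s) := by
    apply antitoneOn_of_deriv_nonpos (convex_Ici s)
    · exact (hf.continuous.add (continuous_const.mul continuous_id)).continuousOn
    · exact (hf.add (differentiable_id.const_mul c)).differentiableOn
    · intro x hx
      rw [interior_Ici] at hx
      have hder : HasDerivAt (fun t => f t + c * t) (deriv f x + c) x := by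
        exact ((hf x).hasDerivAt.add ((hasDerivAt_id x).const_mul c)).congr_deriv (by simp)
      rw [hder.deriv]
      have := hd x (le_of_lt hx)
      linarith
  have hdiv : 0 ≤ (f s - M) / c := div_nonneg (by linarith [hM s le_rfl]) hc.le
  set t := s + (f s - M) / c + 1 with ht
  have hst : s ≤ t := by rw [ht]; linarith
  have hkey := hanti (Set.mem_Ici.mpr le_rfl) (Set.mem_Ici.mpr hst) hst
  have hMt := hM t hst
  simp only [ht] at hkey hMt
  have hcd : c * ((f s - M) / c) = f s - M := mul_div_cancel₀ _ hc.ne'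
  nlinarith

lemma barrier_lemma (f : ℝ → ℝ) (hf : Differentiable ℝ f) (η s : ℝ) (h0 : f s ≤ η)
    (hd : ∀ t, s ≤ t → f t = η → deriv f t < 0) : ∀ t, s ≤ t → f t ≤ η := by
  intro t2 ht2
  by_contra h
  push_neg at h
  have hs2 : s < t2 := lt_of_le_of_ne ht2 (by rintro rfl; linarith)
  set S := {u : ℝ | u ∈ Set.Icc s t2 ∧ f u ≤ η} with hS
  have hne : S.Nonempty := ⟨s, ⟨le_refl s, le_of_lt hs2⟩, h0⟩
  have hbdd : BddAbove S := ⟨t2, fun u hu => hu.1.2⟩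
  have hclosed : IsClosed S := by
    have heq : S = Set.Icc s t2 ∩ f ⁻¹' Set.Iic η := by
      ext u; simp [hS, Set.mem_Icc, and_assoc]
    rw [heq]
    exact isClosed_Icc.inter (isClosed_Iic.preimage hf.continuous)
  set u := sSup S with hu
  have huS : u ∈ S := hclosed.csSup_mem hne hbdd
  obtain ⟨⟨hsu, hut2'⟩, hfu⟩ := huS
  have hut2 : u < t2 := lt_of_le_of_ne hut2' (fun heq => by rw [heq] at hfu; linarith)
  have hgt : ∀ v ∈ Set.Ioc u t2, η < f v := by
    intro v hv
    by_contra hle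
    push_neg at hle
    have : v ∈ S := ⟨⟨le_trans hsu hv.1.le, hv.2⟩, hle⟩
    exact absurd (le_csSup hbdd this) (not_le.mpr hv.1)
  have hfueq : f u = η := by
    by_contra hne'
    have hlt : f u < η := lt_of_le_of_ne hfu hne'
    have hev : ∀ᶠ v in nhdsWithin u (Set.Ioi u), f v < η := by
      have : ∀ᶠ v in nhds u, f v < η :=
        (hf.continuous.tendsto u).eventually (eventually_of_mem (Iio_mem_nhds hlt) fun x hx => hx)
      exact this.filter_mono nhdsWithin_le_nhds
    have hmem : Set.Ioc u t2 ∈ nhdsWithin u (Set.Ioi u) := Ioc_mem_nhdsGT_of_mem ⟨le_refl u, hut2⟩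
    obtain ⟨v, hv1, hv2⟩ := (hev.and (eventually_of_mem hmem (fun x hx => hx))).exists
    exact absurd (hgt v hv2) (not_lt.mpr hv1.le)
  have hslope : Filter.Tendsto (slope f u) (nhdsWithin u (Set.Ioi u)) (nhds (deriv f u)) :=
    ((hasDerivAt_iff_tendsto_slope.mp (hf u).hasDerivAt)).mono_left
      (nhdsWithin_mono u (fun x hx => ne_of_gt hx))
  have hpos : 0 ≤ deriv f u := by
    refine ge_of_tendsto hslope ?_
    filter_upwards [Ioc_mem_nhdsGT_of_mem (Set.mem_Ico.mpr ⟨le_refl u, hut2⟩)] with v hv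
    have h1 : f u < f v := hfueq ▸ hgt v hv
    have h2 : 0 < v - u := sub_pos.mpr hv.1
    rw [slope_def_field]
    exact le_of_lt (div_pos (sub_pos.mpr h1) h2)
  exact absurd (hd u hsu hfueq) (not_lt.mpr hpos)

/-- Perturbed convergence of the deflection angle: if `θ̇₁ = -a sin θ₁ + ω₂(t)` with
`a > 0` and `ω₂ → 0`, and eventually `|θ₁| ≤ π/2 - ε`, then `V₁ = 1 - cos θ₁`
eventually drops below any `δ > 0`, and `θ₁ → 0`. -/
theorem deflection_angle_converges (θ1 ω2 : ℝ → ℝ) (a : ℝ) (ha : 0 < a)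
    (hθ1 : Differentiable ℝ θ1)
    (hode : ∀ t, deriv θ1 t = -a * Real.sin (θ1 t) + ω2 t)
    (hω2 : Filter.Tendsto ω2 Filter.atTop (nhds 0))
    (ε T : ℝ) (hε : ε ∈ Set.Ioo 0 (Real.pi / 2))
    (hbound : ∀ t, T ≤ t → |θ1 t| ≤ Real.pi / 2 - ε) :
    (∀ δ > 0, ∃ T', ∀ t, T' ≤ t → 1 - Real.cos (θ1 t) < δ) ∧
    Filter.Tendsto θ1 Filter.atTop (nhds 0) := by
  obtain ⟨hε0, hεπ⟩ := hε
  have hπ := Real.pi_pos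
  have key : Filter.Tendsto θ1 Filter.atTop (nhds 0) := by
    rw [Metric.tendsto_atTop]
    intro η hη
    set b := min (η / 2) (ε / 2) with hb
    have hb0 : 0 < b := lt_min (by linarith) (by linarith)
    have hbπ : b < Real.pi / 2 := lt_of_le_of_lt (min_le_right _ _) (by linarith)
    have hsb : 0 < Real.sin b := Real.sin_pos_of_pos_of_lt_pi hb0 (by linarith)
    have hc : 0 < a * Real.sin b / 2 := by positivity
    set c := a * Real.sin b / 2 with hcdef
    -- choose T0 past which ω2 is small and the bound applies
    have hev : ∀ᶠ t in Filter.atTop, |ω2 t| < c := by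
      have := hω2.eventually (eventually_of_mem (Metric.ball_mem_nhds 0 hc) fun x hx => hx)
      filter_upwards [this] with t ht
      simpa [Real.dist_eq] using ht
    obtain ⟨T0', hT0'⟩ := Filter.eventually_atTop.mp hev
    set T0 := max T T0' with hT0
    have hω2small : ∀ t, T0 ≤ t → |ω2 t| < c := fun t ht => hT0' t (le_trans (le_max_right _ _) ht)
    have hbd : ∀ t, T0 ≤ t → |θ1 t| ≤ Real.pi / 2 - ε :=
      fun t ht => hbound t (le_trans (le_max_left _ _) ht)
    have hmemb : b ∈ Set.Icc (-(Real.pi / 2)) (Real.pi / 2) := ⟨by linarith, hbπ.le⟩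
    have hmemθ : ∀ t, T0 ≤ t → θ1 t ∈ Set.Icc (-(Real.pi / 2)) (Real.pi / 2) := by
      intro t ht
      have := abs_le.mp (hbd t ht)
      constructor <;> linarith [this.1, this.2]
    -- barrier above
    have hbar_up : ∀ s, T0 ≤ s → θ1 s ≤ b → ∀ t, s ≤ t → θ1 t ≤ b := by
      intro s hs h0
      apply barrier_lemma θ1 hθ1 b s h0
      intro t ht hteq
      rw [hode t, hteq]
      have h4 := (abs_lt.mp (hω2small t (le_trans hs ht))).2
      rw [hcdef] at h4
      nlinarith
    -- barrier below
    have hbar_down : ∀ s, T0 ≤ s → -b ≤ θ1 s → ∀ t, s ≤ t → -b ≤ θ1 t := by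
      intro s hs h0
      have hmain := barrier_lemma (fun t => -θ1 t) hθ1.neg b s (show -θ1 s ≤ b by linarith) ?_
      · intro t ht
        have h := hmain t ht
        have h' : -θ1 t ≤ b := h
        linarith
      · intro t ht hteq
        have hteq' : θ1 t = -b := by
          linarith
        rw [deriv.fun_neg, hode t, hteq', Real.sin_neg]
        have h4 := (abs_lt.mp (hω2small t (le_trans hs ht))).1
        rw [hcdef] at h4
        nlinarith [hsb, ha]
    -- entry from above
    have hexist_up : ∃ s, T0 ≤ s ∧ θ1 s ≤ b := by
      by_contra hno
      push_neg at hno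
      refine escape_lemma θ1 hθ1 c T0 (-(Real.pi / 2 - ε)) hc ?_ ?_
      · intro t ht
        rw [hode t]
        have h1 : b < θ1 t := hno t ht
        have h3 : Real.sin b ≤ Real.sin (θ1 t) :=
          Real.strictMonoOn_sin.monotoneOn hmemb (hmemθ t ht) h1.le
        have h4 := (abs_lt.mp (hω2small t ht)).2
        have h5 : a * Real.sin b ≤ a * Real.sin (θ1 t) :=
          mul_le_mul_of_nonneg_left h3 ha.le
        rw [hcdef] at h4 ⊢
        linarith
      · intro t ht
        have := (abs_le.mp (hbd t ht)).1
        linarith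
    -- entry from below
    have hexist_down : ∃ s, T0 ≤ s ∧ -b ≤ θ1 s := by
      by_contra hno
      push_neg at hno
      refine escape_lemma (fun t => -θ1 t) hθ1.neg c T0 (-(Real.pi / 2 - ε)) hc ?_ ?_
      · intro t ht
        rw [deriv.fun_neg, hode t]
        have h1 : θ1 t < -b := hno t ht
        have h3 : Real.sin (θ1 t) ≤ Real.sin (-b) :=
          Real.strictMonoOn_sin.monotoneOn (hmemθ t ht)
            ⟨by linarith, by linarith⟩ h1.le
        rw [Real.sin_neg] at h3
        have h4 := (abs_lt.mp (hω2small t ht)).1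
        have h5 : a * Real.sin (θ1 t) ≤ -(a * Real.sin b) := by nlinarith
        rw [hcdef] at h4 ⊢
        linarith
      · intro t ht
        have h := (abs_le.mp (hbd t ht)).2
        show -(Real.pi / 2 - ε) ≤ -θ1 t
        linarith
    obtain ⟨s1, hs1, hs1b⟩ := hexist_up
    obtain ⟨s2, hs2, hs2b⟩ := hexist_down
    refine ⟨max s1 s2, fun t ht => ?_⟩
    have h1 : θ1 t ≤ b := hbar_up s1 hs1 hs1b t (le_trans (le_max_left _ _) ht)
    have h2 : -b ≤ θ1 t := hbar_down s2 hs2 hs2b t (le_trans (le_max_right _ _) ht)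
    rw [Real.dist_eq, sub_zero]
    have : |θ1 t| ≤ b := abs_le.mpr ⟨h2, h1⟩
    have hbη : b ≤ η / 2 := min_le_left _ _
    linarith
  refine ⟨?_, key⟩
  intro δ hδ
  have hV : Filter.Tendsto (fun t => 1 - Real.cos (θ1 t)) Filter.atTop (nhds 0) := by
    have h1 : Filter.Tendsto (fun t => Real.cos (θ1 t)) Filter.atTop (nhds 1) := by
      have := (Real.continuous_cos.tendsto 0).comp key
      simpa [Function.comp_def] using this
    have h2 := Filter.Tendsto.sub
      (tendsto_const_nhds : Filter.Tendsto (fun _ : ℝ => (1 : ℝ)) Filter.atTop (nhds 1)) h1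
    simpa using h2
  have := hV.eventually (eventually_of_mem (Iio_mem_nhds hδ) fun x hx => hx)
  obtain ⟨T', hT'⟩ := Filter.eventually_atTop.mp this
  exact ⟨T', fun t ht => hT' t ht⟩
end
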